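/- arXiv:2202.07346 — 9 statements merged into one kernel-verified Lean document; each statement's English description precedes it below -/
import Mathlib

section
/- For any cellular automaton f with minimal neighborhood N, the dual map ĥ sends the cylinder of a pattern with finite domain M to either the empty set (⊤) or the cylinder of a pattern with domain contained in M + N. That is, the cells forced in preimages of a finite pattern all lie within the Minkowski sum of its domain with the neighborhood. -/
abbrev Cell (d : ℕ) := Fin d → ℤ
abbrev Config (d : ℕ) (S : Type*) := Cell d → S

/-- The shift map `σ_v(x)_u = x_(v+u)`. -/
def shiftMap {d : ℕ} {S : Type*} (v : Cell d) (x : Config d S) : Config d S :=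
  fun u => x (v + u)

/-- A cellular automaton: continuous (product topology, `S` discrete) and shift-commuting. -/
def IsCA {d : ℕ} {S : Type*} [TopologicalSpace S] (f : Config d S → Config d S) : Prop :=
  Continuous f ∧ ∀ v : Cell d, f ∘ shiftMap v = shiftMap v ∘ f

/-- The cylinder of the pattern `p` restricted to domain `D`. -/
def cylinder {d : ℕ} {S : Type*} (D : Set (Cell d)) (p : Cell d → S) : Set (Config d S) :=
  {x | ∀ u ∈ D, x u = p u}

/-- Cells forced in preimages of a finite pattern with domain `M` all lie in the Minkowski
sum `M + N`, where `N` is a neighborhood of the CA: if `v ∉ M + N` and the pattern has a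
preimage, then there are two preimages differing at `v`. -/
theorem stmt2 {d : ℕ} {S : Type*} [Fintype S] [Nontrivial S]
    [TopologicalSpace S] [DiscreteTopology S]
    (f : Config d S → Config d S) (hf : IsCA f)
    (N : Set (Cell d)) (hNfin : N.Finite)
    (hN : ∀ x y : Config d S, (∀ u ∈ N, x u = y u) → f x 0 = f y 0)
    (M : Set (Cell d)) (hM : M.Finite) (p : Cell d → S) (v : Cell d)
    (hv : ¬ ∃ m ∈ M, ∃ u ∈ N, v = m + u)
    (hne : ∃ y, f y ∈ cylinder M p) :
    ∃ y z : Config d S, f y ∈ cylinder M p ∧ f z ∈ cylinder M p ∧ y v ≠ z v := by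
  obtain ⟨y, hy⟩ := hne
  obtain ⟨b, hb⟩ := exists_ne (y v)
  set z := Function.update y v b with hz
  have key : ∀ m ∈ M, f z m = f y m := by
    intro m hm
    have h1 := congrFun (congrFun (hf.2 m) z) 0
    have h2 := congrFun (congrFun (hf.2 m) y) 0
    simp only [Function.comp_apply, shiftMap, add_zero] at h1 h2
    rw [← h1, ← h2]
    apply hN
    intro u hu
    have hne' : m + u ≠ v := fun h => hv ⟨m, hm, u, hu, h.symm⟩
    simp [shiftMap, hz, Function.update_of_ne hne']
  refine ⟨y, z, hy, ?_, ?_⟩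
  · intro m hm
    rw [key m hm]; exact hy m hm
  · simp [hz, Function.update_self]
    exact fun h => hb h.symm
end

section
/- The dual map of a cellular automaton commutes with shifts: for every shift vector v and every cylinder (or ⊤) α, f̂(σ_v(α)) = σ_v(f̂(α)). -/
/-- The dual map: intersection of all cylinders (or the empty set)
containing the `f`-preimage of `A`. -/
def dualMap {d : ℕ} {S : Type*} (f : Config d S → Config d S) (A : Set (Config d S)) :
    Set (Config d S) :=
  ⋂₀ {B | ((∃ D p, B = cylinder D p) ∨ B = ∅) ∧ f ⁻¹' A ⊆ B}

/-!
The shift `σ_v` is a bijection commuting with `f`, and pulling back along it permutes the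
cylinders (it only relabels their domains) and fixes `∅`. Hence pulling back along `σ_v` maps
the family of cylinders containing `f⁻¹(α)` bijectively onto the family of those containing
`f⁻¹(σ_v⁻¹(α)) = σ_v⁻¹(f⁻¹(α))`, and so commutes with taking the intersection.
-/

namespace CellularAutomaton

variable {d : ℕ} {S : Type*}

def IsCylinderOrEmpty (B : Set (Config d S)) : Prop :=
  (∃ D p, B = cylinder D p) ∨ B = ∅

lemma preimage_comp_cylinder (g : Cell d ≃ Cell d) (D : Set (Cell d)) (p : Cell d → S) :
    (· ∘ g) ⁻¹' cylinder D p = cylinder (g.symm ⁻¹' D) (p ∘ g.symm) := by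
  ext x
  refine Iff.trans ?_ g.forall_congr_right
  simp [cylinder]

lemma IsCylinderOrEmpty.preimage_comp {B : Set (Config d S)} (hB : IsCylinderOrEmpty B)
    (g : Cell d ≃ Cell d) : IsCylinderOrEmpty ((· ∘ g) ⁻¹' B) := by
  rcases hB with ⟨D, p, rfl⟩ | rfl
  · exact Or.inl ⟨_, _, preimage_comp_cylinder g D p⟩
  · exact Or.inr Set.preimage_empty

lemma dualMap_preimage_equiv (f : Config d S → Config d S) (e : Config d S ≃ Config d S)
    (hfe : f ∘ e = e ∘ f)
    (he : ∀ B, IsCylinderOrEmpty B → IsCylinderOrEmpty (e ⁻¹' B))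
    (he_symm : ∀ B, IsCylinderOrEmpty B → IsCylinderOrEmpty (e.symm ⁻¹' B))
    (A : Set (Config d S)) :
    dualMap f (e ⁻¹' A) = e ⁻¹' dualMap f A := by
  have hpre : f ⁻¹' (e ⁻¹' A) = e ⁻¹' (f ⁻¹' A) := by
    rw [← Set.preimage_comp, ← hfe, Set.preimage_comp]
  have hfamily : {B | IsCylinderOrEmpty B ∧ f ⁻¹' (e ⁻¹' A) ⊆ B} =
      (e ⁻¹' ·) '' {C | IsCylinderOrEmpty C ∧ f ⁻¹' A ⊆ C} := by
    ext B
    simp only [Set.mem_ofPred_eq, Set.mem_image, hpre]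
    constructor
    · rintro ⟨hB, hsub⟩
      refine ⟨e.symm ⁻¹' B, ⟨he_symm B hB, ?_⟩, e.preimage_symm_preimage B⟩
      rwa [← e.preimage_subset, e.preimage_symm_preimage]
    · rintro ⟨C, ⟨hC, hsub⟩, rfl⟩
      exact ⟨he C hC, Set.preimage_mono hsub⟩
  change ⋂₀ {B | IsCylinderOrEmpty B ∧ _} = e ⁻¹' ⋂₀ {C | IsCylinderOrEmpty C ∧ _}
  rw [hfamily, Set.sInter_image, Set.preimage_sInter]

-- Definitionally `⇑(shiftEquiv v) = shiftMap v`, i.e. `x ↦ x ∘ (v + ·)`.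
def shiftEquiv (v : Cell d) : Config d S ≃ Config d S :=
  (Equiv.addLeft v).symm.arrowCongr (Equiv.refl S)

lemma shiftEquiv_symm (v : Cell d) :
    (shiftEquiv v).symm = (shiftEquiv (-v) : Config d S ≃ Config d S) := by
  ext x u
  simp [shiftEquiv]

lemma IsCylinderOrEmpty.preimage_shiftEquiv {B : Set (Config d S)} (hB : IsCylinderOrEmpty B)
    (v : Cell d) : IsCylinderOrEmpty (shiftEquiv v ⁻¹' B) :=
  hB.preimage_comp (Equiv.addLeft v)

lemma dualMap_preimage_shiftEquiv {f : Config d S → Config d S}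
    (hf : ∀ w, f ∘ shiftMap w = shiftMap w ∘ f) (v : Cell d) (A : Set (Config d S)) :
    dualMap f (shiftEquiv v ⁻¹' A) = shiftEquiv v ⁻¹' dualMap f A := by
  refine dualMap_preimage_equiv f _ (hf v) (fun B hB ↦ hB.preimage_shiftEquiv v) ?_ A
  rw [shiftEquiv_symm]
  exact fun B hB ↦ hB.preimage_shiftEquiv (-v)

end CellularAutomaton

theorem stmt5_general {d : ℕ} {S : Type*} [TopologicalSpace S]
    (f : Config d S → Config d S) (hf : IsCA f)
    (v : Cell d) (α : Set (Config d S)) :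
    dualMap f (shiftMap v '' α) = shiftMap v '' dualMap f α := by
  change dualMap f (CellularAutomaton.shiftEquiv v '' α) =
    CellularAutomaton.shiftEquiv v '' dualMap f α
  rw [Equiv.image_eq_preimage_symm, Equiv.image_eq_preimage_symm,
    CellularAutomaton.shiftEquiv_symm]
  exact CellularAutomaton.dualMap_preimage_shiftEquiv hf.2 (-v) α

/-- The dual map of a cellular automaton commutes with shifts:
`f̂(σ_v(α)) = σ_v(f̂(α))` for every cylinder (or `⊤ = ∅`) `α`. -/
theorem stmt5 {d : ℕ} {S : Type*} [Fintype S] [TopologicalSpace S] [DiscreteTopology S]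
    (f : Config d S → Config d S) (hf : IsCA f)
    (v : Cell d) (α : Set (Config d S)) (hα : (∃ D p, α = cylinder D p) ∨ α = ∅) :
    dualMap f (shiftMap v '' α) = shiftMap v '' dualMap f α :=
  stmt5_general f hf v α
end

section
/- Every locally fixed finite pattern of a cellular automaton admits a unique maximal self-enforcing subpattern: among all subsets D of the domain M such that the restriction p|D is self-enforcing (f̂([p|D]) ≥ [p|D]), there is a largest one, namely the union E of all such D, and p|E is self-enforcing. -/
/-- Every locally fixed finite pattern admits a unique maximal self-enforcing subpattern:
the union `E` of all `D ⊆ M` with `f⁻¹([p|D]) ⊆ [p|D]` is itself such a set, and it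
contains every other such set. -/
theorem stmt6 {d : ℕ} {S : Type*} [Fintype S] [TopologicalSpace S] [DiscreteTopology S]
    (f : Config d S → Config d S) (hf : IsCA f)
    (M : Set (Cell d)) (hM : M.Finite) (p : Cell d → S)
    (hlf : ∃ q : Config d S, (∀ u ∈ M, q u = p u) ∧ (∀ u ∈ M, f q u = p u))
    (E : Set (Cell d))
    (hE : E = ⋃₀ {D | D ⊆ M ∧ f ⁻¹' cylinder D p ⊆ cylinder D p}) :
    E ⊆ M ∧ f ⁻¹' cylinder E p ⊆ cylinder E p ∧
      ∀ D ⊆ M, f ⁻¹' cylinder D p ⊆ cylinder D p → D ⊆ E := by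
  subst hE
  refine ⟨?_, ?_, ?_⟩
  · rintro u ⟨D, ⟨hDM, _⟩, hu⟩
    exact hDM hu
  · rintro x hx u ⟨D, ⟨hDM, hD⟩, hu⟩
    have hxD : x ∈ f ⁻¹' cylinder D p := by
      intro v hv
      exact hx v ⟨D, ⟨hDM, hD⟩, hv⟩
    exact hD hxD u hu
  · intro D hDM hD u hu
    exact ⟨D, ⟨hDM, hD⟩, hu⟩
end

section
/- For a cellular automaton f with a quiescent state 0, the following are equivalent for any n ∈ N: (1) there exists a finite-support configuration x such that f^{-n}(x) contains a finite-support configuration and f^{-(n+1)}(x) = ∅; (2) there exists a configuration x with f^{-n}(x) ≠ ∅ and f^{-(n+1)}(x) = ∅; (3) there exists a finite pattern p with a configuration in f^{-n}([p]) but f^{-(n+1)}([p]) = ∅. -/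
/-!
Since `S` is finite, the configuration space is compact, so the range of the continuous map
`f^[n+1]` is closed. A configuration `x = f^[n] y` outside it therefore has a cylinder
neighbourhood `[x|_D]`, `D` finite, that misses the range: this is the pattern of (3).
Conversely, `f^[n]` is again a cellular automaton, hence has a finite neighbourhood `M`;
truncating `y` to `z` outside `D + M` leaves `f^[n] y` unchanged on `D`, and the truncated
configuration and its image have finite support because `z` is quiescent.
-/

open Set Function Pointwise

lemma IsOpen.exists_finset_forall_mem_eq_imp_mem {ι S : Type*} [TopologicalSpace S]
    {U : Set (ι → S)} (hU : IsOpen U) {x : ι → S} (hx : x ∈ U) :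
    ∃ D : Finset ι, ∀ y, (∀ u ∈ D, y u = x u) → y ∈ U := by
  obtain ⟨D, V, hV, hDV⟩ := isOpen_pi_iff.1 hU x hx
  exact ⟨D, fun y hy => hDV fun u hu => (hy u hu) ▸ (hV u hu).2⟩

section ProductOfDiscrete

variable {ι S : Type*} [TopologicalSpace S] [DiscreteTopology S]

lemma isOpen_setOf_forall_mem_eq (D : Finset ι) (x : ι → S) :
    IsOpen {y : ι → S | ∀ u ∈ D, y u = x u} := by
  convert isOpen_set_pi D.finite_toSet fun u _ => isOpen_discrete {x u}
  ext y
  simp [Set.mem_pi]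

lemma Continuous.exists_finset_dependsOn [Finite S] {T : Type*} [TopologicalSpace T]
    [DiscreteTopology T] {g : (ι → S) → T} (hg : Continuous g) :
    ∃ D : Finset ι, DependsOn g D := by
  classical
  have hlocal : ∀ x, ∃ D : Finset ι, ∀ y, (∀ u ∈ D, y u = x u) → g y = g x := fun x =>
    (hg.isOpen_preimage {g x} (isOpen_discrete _)).exists_finset_forall_mem_eq_imp_mem rfl
  choose D hD using hlocal
  obtain ⟨t, ht⟩ := isCompact_univ.elim_finite_subcover (fun x => {y | ∀ u ∈ D x, y u = x u})
    (fun x => isOpen_setOf_forall_mem_eq (D x) x) fun x _ => mem_iUnion.2 ⟨x, fun _ _ => rfl⟩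
  refine ⟨t.biUnion D, fun x y hxy => ?_⟩
  obtain ⟨c, hct, hxc⟩ := mem_iUnion₂.1 (ht (mem_univ x))
  have hyc : ∀ u ∈ D c, y u = c u := fun u hu =>
    (hxy u (by simpa using ⟨c, hct, hu⟩)).symm.trans (hxc u hu)
  rw [hD c x hxc, hD c y hyc]

end ProductOfDiscrete

lemma setOf_apply_ne_subset_sub {G S : Type*} [AddGroup G] [DecidableEq G]
    {g : (G → S) → G → S} {M : Finset G}
    (hM : ∀ x y u, (∀ v ∈ M, x (u + v) = y (u + v)) → g x u = g y u) {z : S}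
    (hz : g (fun _ => z) = fun _ => z) {E : Finset G} {y : G → S} (hy : ∀ u ∉ E, y u = z) :
    {u | g y u ≠ z} ⊆ ↑(E - M) := by
  intro u hu
  by_contra hnot
  refine hu ((hM y _ u fun v hv => hy _ fun huv => hnot ?_).trans (congrFun hz u))
  simpa only [add_sub_cancel_right, Finset.mem_coe] using Finset.sub_mem_sub huv hv

section CellularAutomata

variable {d : ℕ} {S : Type*} [TopologicalSpace S] {f : Config d S → Config d S}

lemma IsCA.iterate (hf : IsCA f) (n : ℕ) : IsCA f^[n] :=
  ⟨hf.1.iterate n, fun v =>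
    (Function.Commute.iterate_left (fun x => congrFun (hf.2 v) x) n).comp_eq⟩

variable [Finite S] [DiscreteTopology S]

lemma IsCA.exists_neighborhood (hf : IsCA f) :
    ∃ M : Finset (Cell d), ∀ x y u, (∀ v ∈ M, x (u + v) = y (u + v)) → f x u = f y u := by
  obtain ⟨M, hM⟩ := ((continuous_apply 0).comp hf.1).exists_finset_dependsOn
  refine ⟨M, fun x y u hxy => ?_⟩
  have hshift : ∀ w, f w u = f (shiftMap u w) 0 := fun w => by
    simpa [shiftMap] using (congrFun (congrFun (hf.2 u) w) 0).symm
  rw [hshift x, hshift y]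
  exact hM hxy

lemma exists_finset_forall_notMem_cylinder_of_notMem_range {g : Config d S → Config d S}
    (hg : Continuous g) {x : Config d S} (hx : x ∉ range g) :
    ∃ D : Finset (Cell d), ∀ y, g y ∉ cylinder D x := by
  obtain ⟨D, hD⟩ :=
    (isCompact_range hg).isClosed.isOpen_compl.exists_finset_forall_mem_eq_imp_mem hx
  exact ⟨D, fun y hy => hD (g y) hy (mem_range_self y)⟩

lemma IsCA.exists_finite_support_mem_cylinder (hf : IsCA f) {z : S}
    (hz : f (fun _ => z) = fun _ => z) {D : Set (Cell d)} (hD : D.Finite) {p : Cell d → S}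
    {y : Config d S} (hy : f y ∈ cylinder D p) :
    ∃ y' : Config d S, {u | y' u ≠ z}.Finite ∧ {u | f y' u ≠ z}.Finite ∧
      f y' ∈ cylinder D p := by
  obtain ⟨M, hM⟩ := hf.exists_neighborhood
  set E := hD.toFinset + M
  set y' : Config d S := fun u => if u ∈ E then y u else z
  have hy' : ∀ u ∉ E, y' u = z := fun u hu => if_neg hu
  refine ⟨y', E.finite_toSet.subset fun u hu => by_contra (hu ∘ hy' u),
    (E - M).finite_toSet.subset (setOf_apply_ne_subset_sub hM hz hy'), fun u hu => ?_⟩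
  rw [← hy u hu]
  exact hM _ _ u fun v hv => if_pos (Finset.add_mem_add (hD.mem_toFinset.2 hu) hv)

end CellularAutomata

/-- For a CA with quiescent state `z`, the following are equivalent: (1) some
finite-support configuration has a finite-support `n`-th preimage but no `(n+1)`-st
preimage; (2) some configuration has an `n`-th preimage but no `(n+1)`-st preimage;
(3) some finite pattern has an `n`-th preimage but no `(n+1)`-st preimage. -/
theorem stmt7 {d : ℕ} {S : Type*} [Fintype S] [TopologicalSpace S] [DiscreteTopology S]
    (f : Config d S → Config d S) (hf : IsCA f) (z : S)
    (hz : f (fun _ => z) = fun _ => z) (n : ℕ) :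
    ((∃ x : Config d S, {u | x u ≠ z}.Finite ∧
        (∃ y : Config d S, {u | y u ≠ z}.Finite ∧ f^[n] y = x) ∧ ¬ ∃ y, f^[n+1] y = x) ↔
      (∃ x : Config d S, (∃ y, f^[n] y = x) ∧ ¬ ∃ y, f^[n+1] y = x)) ∧
    ((∃ x : Config d S, (∃ y, f^[n] y = x) ∧ ¬ ∃ y, f^[n+1] y = x) ↔
      (∃ D : Set (Cell d), D.Finite ∧ ∃ p : Cell d → S,
        (∃ y, f^[n] y ∈ cylinder D p) ∧ ¬ ∃ y, f^[n+1] y ∈ cylinder D p)) := by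
  refine ⟨⟨?forget, ?finite ∘ ?pattern⟩, ?pattern, ?forget ∘ ?finite⟩
  case forget =>
    rintro ⟨x, -, ⟨y, -, hy⟩, hx⟩
    exact ⟨x, ⟨y, hy⟩, hx⟩
  case pattern =>
    rintro ⟨x, ⟨y, rfl⟩, hx⟩
    obtain ⟨D, hD⟩ := exists_finset_forall_notMem_cylinder_of_notMem_range
      (hf.iterate (n + 1)).1 hx
    exact ⟨D, D.finite_toSet, f^[n] y, ⟨y, fun _ _ => rfl⟩, fun ⟨y', hy'⟩ => hD y' hy'⟩
  case finite =>
    rintro ⟨D, hD, p, ⟨y, hy⟩, hp⟩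
    obtain ⟨y', hy'fin, hfin, hmem⟩ :=
      (hf.iterate n).exists_finite_support_mem_cylinder (iterate_fixed hz n) hD hy
    exact ⟨f^[n] y', hfin, ⟨y', hy'fin, rfl⟩, fun ⟨w, hw⟩ => hp ⟨w, hw ▸ hmem⟩⟩
end

section
/- The dual map f̂ : I → I of a cellular automaton is continuous, where I is the space of cylinders plus ⊤ with the topology generated by the sets U_p = {α : [p] ≤ α} for finite patterns p together with {⊤}. -/
/-- The space `I` of cylinders plus `⊤ = ∅`. -/
def CylOrTop (d : ℕ) (S : Type*) : Type _ :=
  {A : Set (Config d S) // (∃ D p, A = cylinder D p) ∨ A = ∅}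

/-- The topology on `I` generated by the sets `U_p = {α | [p] ≤ α}` for finite patterns
`p` (where `[p] ≤ α` means `α ⊆ [p]`, so `⊤ = ∅` lies in every `U_p`), plus `{⊤}`. -/
def cylTopology (d : ℕ) (S : Type*) : TopologicalSpace (CylOrTop d S) :=
  TopologicalSpace.generateFrom
    ({U | ∃ D : Set (Cell d), D.Finite ∧ ∃ p : Cell d → S,
        U = {α : CylOrTop d S | α.val ⊆ cylinder D p}} ∪
      {{α : CylOrTop d S | α.val = ∅}})

open Topology

section

variable {d : ℕ} {S : Type*}

lemma cylinder_eq_biInter (D : Set (Cell d)) (p : Cell d → S) :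
    cylinder D p = ⋂ u ∈ D, (fun x : Config d S => x u) ⁻¹' {p u} := by
  ext x
  simp [cylinder]

lemma cylinder_anti {D E : Set (Cell d)} (h : E ⊆ D) (p : Cell d → S) :
    cylinder D p ⊆ cylinder E p :=
  fun _ hx u hu => hx u (h hu)

lemma preimage_subset_dualMap (f : Config d S → Config d S) (A : Set (Config d S)) :
    f ⁻¹' A ⊆ dualMap f A :=
  fun _ hx _ hB => hB.2 hx

lemma dualMap_subset_iff {f : Config d S → Config d S} {A C : Set (Config d S)}
    (hC : (∃ D p, C = cylinder D p) ∨ C = ∅) :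
    dualMap f A ⊆ C ↔ f ⁻¹' A ⊆ C :=
  ⟨(preimage_subset_dualMap f A).trans, fun h => Set.sInter_subset_of_mem ⟨hC, h⟩⟩

lemma isOpen_setOf_subset_cylinder {D : Set (Cell d)} (hD : D.Finite) (p : Cell d → S) :
    IsOpen[cylTopology d S] {α : CylOrTop d S | α.val ⊆ cylinder D p} :=
  TopologicalSpace.isOpen_generateFrom_of_mem (.inl ⟨D, hD, p, rfl⟩)

lemma isOpen_setOf_eq_empty : IsOpen[cylTopology d S] {α : CylOrTop d S | α.val = ∅} :=
  TopologicalSpace.isOpen_generateFrom_of_mem (.inr rfl)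

variable [TopologicalSpace S] [DiscreteTopology S]

lemma isClosed_cylinder (D : Set (Cell d)) (p : Cell d → S) :
    IsClosed (cylinder D p) := by
  rw [cylinder_eq_biInter]
  exact isClosed_biInter fun u _ => (isClosed_discrete _).preimage (continuous_apply u)

lemma isOpen_cylinder {D : Set (Cell d)} (hD : D.Finite) (p : Cell d → S) :
    IsOpen (cylinder D p) := by
  rw [cylinder_eq_biInter]
  exact hD.isOpen_biInter fun u _ => (isOpen_discrete _).preimage (continuous_apply u)

variable [Finite S] {f : Config d S → Config d S}

lemma exists_finite_preimage_cylinder_subset (hf : Continuous f) {C : Set (Config d S)}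
    (hC : IsOpen C) {D : Set (Cell d)} {p : Cell d → S} (h : f ⁻¹' cylinder D p ⊆ C) :
    ∃ E ⊆ D, E.Finite ∧ f ⁻¹' cylinder E p ⊆ C := by
  let V : {E : Finset (Cell d) // ↑E ⊆ D} → Set (Config d S) := fun E => f ⁻¹' cylinder E.1 p
  have : Nonempty {E : Finset (Cell d) // ↑E ⊆ D} := ⟨⟨∅, by simp⟩⟩
  have hV_directed : Directed (· ⊇ ·) V := fun E F =>
    ⟨⟨E.1 ∪ F.1, by simpa using And.intro E.2 F.2⟩,
      Set.preimage_mono (cylinder_anti (by simp) p),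
      Set.preimage_mono (cylinder_anti (by simp) p)⟩
  have hV_closed (E) : IsClosed (V E) := (isClosed_cylinder _ p).preimage hf
  have hV_inter : ⋂ E, V E ⊆ f ⁻¹' cylinder D p := fun x hx u hu =>
    Set.mem_iInter.mp hx ⟨{u}, by simpa using hu⟩ u (by simp)
  obtain ⟨E, hE⟩ := exists_subset_nhds_of_isCompact' hV_directed
    (fun E => (hV_closed E).isCompact) hV_closed
    (fun x hx => hC.mem_nhds (h (hV_inter hx)))
  exact ⟨E.1, E.2, E.1.finite_toSet, hE⟩

lemma isOpen_setOf_preimage_subset (hf : Continuous f) {C : Set (Config d S)} (hC : IsOpen C) :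
    IsOpen[cylTopology d S] {α : CylOrTop d S | f ⁻¹' α.val ⊆ C} := by
  rw [@isOpen_iff_forall_mem_open]
  rintro ⟨A, ⟨D, p, rfl⟩ | rfl⟩ hA
  · obtain ⟨E, hED, hE, hEC⟩ := exists_finite_preimage_cylinder_subset hf hC hA
    exact ⟨_, fun β hβ => (Set.preimage_mono hβ).trans hEC,
      isOpen_setOf_subset_cylinder hE p, cylinder_anti hED p⟩
  · refine ⟨_, fun β (hβ : β.val = ∅) => ?_, isOpen_setOf_eq_empty, rfl⟩
    simp [hβ]

lemma isOpen_setOf_dualMap_subset (hf : Continuous f) {C : Set (Config d S)} (hC : IsOpen C)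
    (hC_cyl : (∃ D p, C = cylinder D p) ∨ C = ∅) :
    IsOpen[cylTopology d S] {α : CylOrTop d S | dualMap f α.val ⊆ C} := by
  simp_rw [dualMap_subset_iff hC_cyl]
  exact isOpen_setOf_preimage_subset hf hC

end

/-- The dual map `f̂ : I → I` of a cellular automaton is continuous. -/
theorem stmt8 {d : ℕ} {S : Type*} [Fintype S] [TopologicalSpace S] [DiscreteTopology S]
    (f : Config d S → Config d S) (hf : IsCA f)
    (hcl : ∀ A : Set (Config d S), ((∃ D p, A = cylinder D p) ∨ A = ∅) →
      ((∃ D p, dualMap f A = cylinder D p) ∨ dualMap f A = ∅)) :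
    @Continuous _ _ (cylTopology d S) (cylTopology d S)
      (fun α : CylOrTop d S => (⟨dualMap f α.val, hcl α.val α.property⟩ : CylOrTop d S)) := by
  let := cylTopology d S
  refine continuous_generateFrom_iff.mpr ?_
  rintro s (⟨D, hD, p, rfl⟩ | rfl)
  · exact isOpen_setOf_dualMap_subset hf.1 (isOpen_cylinder hD p) (.inl ⟨D, p, rfl⟩)
  · show IsOpen {α : CylOrTop d S | dualMap f α.val = ∅}
    simpa only [Set.subset_empty_iff] using
      isOpen_setOf_dualMap_subset hf.1 isOpen_empty (.inr rfl)
end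

section
/- Let x be a spatially periodic configuration with spatial periods n₁e₁,...,n_de_d and suppose h is a cellular automaton with h(x) = x. Let B = [0,n₁−1]×···×[0,n_d−1]. If there exists a finite subpattern p of x such that every h-preimage of every configuration extending p agrees with x on B, then x is self-enforcing: every h-preimage of x equals x, i.e., h^{-1}(x) = {x}. -/
/-- The set of periods of `x` form an additive subgroup of `ℤ^d`. -/
def periodGroup {d : ℕ} {S : Type*} (x : Config d S) : AddSubgroup (Cell d) where
  carrier := {v | shiftMap v x = x}
  zero_mem' := by
    funext u
    simp [shiftMap]
  add_mem' := by
    intro v w hv hw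
    funext u
    have hv' := congrFun hv
    have hw' := congrFun hw
    simp only [shiftMap] at hv' hw' ⊢
    calc x (v + w + u) = x (v + (w + u)) := by ring_nf
      _ = x (w + u) := hv' (w + u)
      _ = x u := hw' u
  neg_mem' := by
    intro v hv
    funext u
    have hv' := congrFun hv
    simp only [shiftMap] at hv' ⊢
    calc x (-v + u) = x (v + (-v + u)) := (hv' (-v + u)).symm
      _ = x u := by ring_nf

/-- If a spatially periodic fixed point `x` of a CA `h` has a finite subpattern such
that every `h`-preimage of every configuration extending it agrees with `x` on the
fundamental box `B`, then `x` is self-enforcing: `h⁻¹(x) = {x}`. -/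
theorem stmt10 {d : ℕ} {S : Type*} [Fintype S] [TopologicalSpace S] [DiscreteTopology S]
    (h : Config d S → Config d S) (hh : IsCA h)
    (x : Config d S) (n : Fin d → ℕ) (hn : ∀ i, 1 ≤ n i)
    (hper : ∀ i : Fin d, shiftMap (fun j => if j = i then (n i : ℤ) else 0) x = x)
    (hfix : h x = x)
    (B : Set (Cell d)) (hB : B = {u : Cell d | ∀ i, 0 ≤ u i ∧ u i < (n i : ℤ)})
    (D : Set (Cell d)) (hD : D.Finite)
    (hcert : ∀ y ∈ cylinder D x, ∀ z : Config d S, h z = y → ∀ u ∈ B, z u = x u) :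
    ∀ z : Config d S, h z = x → z = x := by
  intro z hz
  -- generators of the period group
  have hgen : ∀ i : Fin d, Pi.single i ((n i : ℤ)) ∈ periodGroup x := by
    intro i
    have := hper i
    have heq : (fun j => if j = i then (n i : ℤ) else 0) = Pi.single i ((n i : ℤ)) := by
      funext j
      by_cases hj : j = i <;> simp [Pi.single, Function.update, hj]
    rw [heq] at this
    exact this
  -- any vector with all coordinates divisible by n is a period
  have hlat : ∀ v : Cell d, (∀ i, (n i : ℤ) ∣ v i) → shiftMap v x = x := by
    intro v hv
    have hmem : v ∈ periodGroup x := by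
      have hrepr : v = ∑ i : Fin d, (v i / (n i : ℤ)) • (Pi.single i ((n i : ℤ)) : Cell d) := by
        have : ∀ i, (v i / (n i : ℤ)) • (Pi.single i ((n i : ℤ)) : Cell d)
            = (Pi.single i (v i) : Cell d) := by
          intro i
          funext j
          rcases eq_or_ne j i with hj | hj
          · subst hj
            simp [Pi.single_apply, smul_eq_mul,
              Int.ediv_mul_cancel (hv j)]
          · simp [Pi.single_apply, hj]
        simp only [this]
        exact (Finset.univ_sum_single v).symm
      rw [hrepr]
      exact AddSubgroup.sum_mem _ (fun i _ => AddSubgroup.zsmul_mem _ (hgen i) _)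
    exact hmem
  funext u
  -- decompose u = v + b with b in the box B
  set b : Cell d := fun i => u i % (n i : ℤ) with hbdef
  set v : Cell d := u - b with hvdef
  have hnpos : ∀ i, (0 : ℤ) < (n i : ℤ) := by
    intro i; exact_mod_cast hn i
  have hvdvd : ∀ i, (n i : ℤ) ∣ v i := by
    intro i
    simp only [hvdef, Pi.sub_apply, hbdef]
    exact Int.dvd_self_sub_of_emod_eq rfl
  have hbB : b ∈ B := by
    rw [hB]
    intro i
    exact ⟨Int.emod_nonneg _ (ne_of_gt (hnpos i)), Int.emod_lt_of_pos _ (hnpos i)⟩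
  have hxper : shiftMap v x = x := hlat v hvdvd
  -- shiftMap v z is a preimage of x
  have hz2 : h (shiftMap v z) = x := by
    have := congrFun (hh.2 v) z
    simp only [Function.comp_apply] at this
    rw [this, hz, hxper]
  have hxcyl : x ∈ cylinder D x := fun u _ => rfl
  have := hcert x hxcyl (shiftMap v z) hz2 b hbB
  have hvb : v + b = u := by
    funext i; simp [hvdef]
  calc z u = shiftMap v z b := by rw [shiftMap, hvb]
    _ = x b := this
    _ = x (v + b) := (congrFun hxper b).symm
    _ = x u := by rw [hvb]
end

section
/- In Conway's Game of Life, the 6×6-periodic configuration kynnös, obtained by tiling the plane with the 6×6 pattern Q with rows 001101 / 001011 / 110000 / 010110 / 100110 / 110000, is a fixed point: g(x^Q) = x^Q. -/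
/-- A Game of Life configuration: an assignment of live/dead to each cell of `ℤ²`. -/
abbrev Conf := ℤ × ℤ → Bool

/-- The eight Moore-neighborhood offsets. -/
def nbrOffsets : List (ℤ × ℤ) :=
  [(-1,-1),(-1,0),(-1,1),(0,-1),(0,1),(1,-1),(1,0),(1,1)]

/-- The number of live Moore neighbors of `v` in `x`. -/
def liveNbrs (x : Conf) (v : ℤ × ℤ) : ℕ :=
  nbrOffsets.countP (fun o => x (v.1 + o.1, v.2 + o.2))

/-- One step of Conway's Game of Life (rule B3/S23). -/
def lifeStep (x : Conf) : Conf := fun v =>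
  if x v then decide (liveNbrs x v = 2 ∨ liveNbrs x v = 3)
  else decide (liveNbrs x v = 3)

/-- The kynnös agar: the `6 × 6`-periodic configuration tiled by the pattern `Q` with
rows (top to bottom) `001101 / 001011 / 110000 / 010110 / 100110 / 110000`;
`x^Q_(i,j) = Q_(i mod 6, j mod 6)`. -/
def kynnos : Conf := fun v =>
  let i := v.1 % 6
  let j := v.2 % 6
  if j = 0 then i == 2 || i == 3 || i == 5
  else if j = 1 then i == 2 || i == 4 || i == 5
  else if j = 2 then i == 0 || i == 1
  else if j = 3 then i == 1 || i == 3 || i == 4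
  else if j = 4 then i == 0 || i == 3 || i == 4
  else i == 0 || i == 1

lemma kynnos_mod (a b : ℤ) : kynnos (a, b) = kynnos (a % 6, b % 6) := by
  have h1 : a % 6 % 6 = a % 6 := Int.emod_emod_of_dvd a dvd_rfl
  have h2 : b % 6 % 6 = b % 6 := Int.emod_emod_of_dvd b dvd_rfl
  simp only [kynnos, h1, h2]

lemma liveNbrs_mod (a b : ℤ) :
    liveNbrs kynnos (a, b) = liveNbrs kynnos (a % 6, b % 6) := by
  simp only [liveNbrs, nbrOffsets, List.countP]
  have key : ∀ o1 o2 : ℤ, kynnos (a + o1, b + o2) = kynnos (a % 6 + o1, b % 6 + o2) := by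
    intro o1 o2
    rw [kynnos_mod (a + o1), kynnos_mod (a % 6 + o1)]
    have e1 : (a + o1) % 6 = (a % 6 + o1) % 6 := by omega
    have e2 : (b + o2) % 6 = (b % 6 + o2) % 6 := by omega
    rw [e1, e2]
  simp only [key]

/-- Kynnös is a fixed point of Game of Life. -/
theorem stmt12 : lifeStep kynnos = kynnos := by
  funext v
  obtain ⟨a, b⟩ := v
  have hm : lifeStep kynnos (a, b) = lifeStep kynnos (a % 6, b % 6) := by
    simp only [lifeStep, kynnos_mod a b, liveNbrs_mod a b]
  rw [hm, kynnos_mod a b]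
  have ha : 0 ≤ a % 6 ∧ a % 6 < 6 := ⟨Int.emod_nonneg a (by norm_num), Int.emod_lt_of_pos a (by norm_num)⟩
  have hb : 0 ≤ b % 6 ∧ b % 6 < 6 := ⟨Int.emod_nonneg b (by norm_num), Int.emod_lt_of_pos b (by norm_num)⟩
  obtain ⟨ha1, ha2⟩ := ha
  obtain ⟨hb1, hb2⟩ := hb
  set i := a % 6
  set j := b % 6
  interval_cases i <;> interval_cases j <;> decide
end

section
/- In Conway's Game of Life, the 8×4-periodic configuration 'marching band', obtained by tiling the plane with the 8×4 pattern R with rows 10000010 / 11001100 / 11001100 / 00101000, has temporal period two: g²(x^R) = x^R but g(x^R) ≠ x^R. -/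
/-- The marching band agar: the `8 × 4`-periodic configuration tiled by the pattern `R`
with rows (top to bottom) `10000010 / 11001100 / 11001100 / 00101000`;
`x^R_(i,j) = R_(i mod 8, j mod 4)`. -/
def marchingBand : Conf := fun v =>
  let i := v.1 % 8
  let j := v.2 % 4
  if j = 0 then i == 0 || i == 6
  else if j = 3 then i == 2 || i == 4
  else i == 0 || i == 1 || i == 4 || i == 5

/-! Game of Life commutes with translations, so every period of a configuration is a period
of its successor. Hence `g² x^R` is `8 × 4`-periodic like `x^R`, and `g² x^R = x^R` reduces to a
finite computation on one `8 × 4` tile; `g x^R ≠ x^R` is seen at the single cell `(1, 1)`. -/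

open Function

theorem Function.Periodic.liveNbrs {x : Conf} {c : ℤ × ℤ} (hx : Periodic x c) :
    Periodic (liveNbrs x) c := by
  intro v
  refine List.countP_congr fun o _ => ?_
  have hv : ((v + c).1 + o.1, (v + c).2 + o.2) = (v.1 + o.1, v.2 + o.2) + c := by
    ext <;> simp only [Prod.fst_add, Prod.snd_add] <;> ring
  rw [hv, hx]

theorem Function.Periodic.lifeStep {x : Conf} {c : ℤ × ℤ} (hx : Periodic x c) :
    Periodic (lifeStep x) c := by
  intro v
  simp only [_root_.lifeStep, hx v, hx.liveNbrs v]

theorem Function.Periodic.apply_emod {α : Type*} {x : ℤ × ℤ → α} {p q : ℤ} (hp : Periodic x (p, 0))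
    (hq : Periodic x (0, q)) (i j : ℤ) : x (i, j) = x (i % p, j % q) := by
  have hv : (i, j) = (i % p, j % q) + (i / p) • (p, 0) + (j / q) • (0, q) := by
    ext <;> simp [Int.emod_add_ediv_mul]
  rw [hv, (hq.zsmul _) _, (hp.zsmul _) _]

theorem funext_of_periodic {α : Type*} {x y : ℤ × ℤ → α} {p q : ℕ} (hp : 0 < p) (hq : 0 < q)
    (hxp : Periodic x (p, 0)) (hxq : Periodic x (0, q)) (hyp : Periodic y (p, 0))
    (hyq : Periodic y (0, q)) (h : ∀ (i : Fin p) (j : Fin q), x (i, j) = y (i, j)) :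
    x = y := by
  funext ⟨i, j⟩
  rw [hxp.apply_emod hxq, hyp.apply_emod hyq]
  have hp' : (0 : ℤ) < p := Int.natCast_pos.mpr hp
  have hq' : (0 : ℤ) < q := Int.natCast_pos.mpr hq
  have hi := Int.emod_nonneg i hp'.ne'
  have hj := Int.emod_nonneg j hq'.ne'
  have htile := h ⟨(i % p).toNat, by have := Int.emod_lt_of_pos i hp'; omega⟩
    ⟨(j % q).toNat, by have := Int.emod_lt_of_pos j hq'; omega⟩
  simpa [Int.toNat_of_nonneg hi, Int.toNat_of_nonneg hj] using htile

theorem marchingBand_periodic_fst : Periodic marchingBand (8, 0) := by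
  intro v
  simp [marchingBand]

theorem marchingBand_periodic_snd : Periodic marchingBand (0, 4) := by
  intro v
  simp [marchingBand]

theorem lifeStep_lifeStep_marchingBand_tile (i : Fin 8) (j : Fin 4) :
    lifeStep (lifeStep marchingBand) (i, j) = marchingBand (i, j) := by
  revert i j
  decide

/-- The marching band has temporal period exactly two under Game of Life. -/
theorem stmt13 : lifeStep (lifeStep marchingBand) = marchingBand ∧
    lifeStep marchingBand ≠ marchingBand := by
  constructor
  · exact funext_of_periodic (p := 8) (q := 4) (by norm_num) (by norm_num)
      marchingBand_periodic_fst.lifeStep.lifeStep marchingBand_periodic_snd.lifeStep.lifeStep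
      marchingBand_periodic_fst marchingBand_periodic_snd lifeStep_lifeStep_marchingBand_tile
  · intro h
    exact absurd (congrFun h (1, 1)) (by decide)
end

section
/- Let f be a cellular automaton with a self-enforcing finite pattern p (f^{-1}([p]) ⊆ [p]) and suppose there exist a configuration y ∈ [p] in the limit set Ω(f) and an integer m ≥ 1 such that f^m(y) ∉ [p] and moreover for all n ≥ m, f^n(y) ∉ [p]. Then f restricted to Ω(f) is chain-wandering: for sufficiently small ε > 0, there is no ε-chain within Ω(f) from y back to y. -/
/-- The limit set `Ω(f) = ⋂ₖ f^k(S^(ℤ^d))`. -/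
def limitSet {d : ℕ} {S : Type*} (f : Config d S → Config d S) : Set (Config d S) :=
  ⋂ k : ℕ, f^[k] '' Set.univ

/-- `x` and `y` agree on the centered box of radius `m`. -/
def agreeOn {d : ℕ} {S : Type*} (m : ℕ) (x y : Config d S) : Prop :=
  ∀ u : Cell d, (∀ i, |u i| ≤ (m : ℤ)) → x u = y u

/-- Monotonicity of agreement. -/
lemma agreeOn_mono {d : ℕ} {S : Type*} {m m' : ℕ} (h : m' ≤ m) {x y : Config d S}
    (hxy : agreeOn m x y) : agreeOn m' x y := by
  intro u hu
  exact hxy u fun i => (hu i).trans (by exact_mod_cast h)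

/-- A continuous function on a compact product of discrete spaces evaluated at the
origin depends on finitely many coordinates. -/
lemma exists_finset_local {d : ℕ} {S : Type*} [Fintype S] [TopologicalSpace S]
    [DiscreteTopology S] (f : Config d S → Config d S) (hcont : Continuous f) :
    ∃ F : Finset (Cell d), ∀ x x' : Config d S, (∀ u ∈ F, x u = x' u) → f x 0 = f x' 0 := by
  classical
  have h1 : ∀ x : Config d S, ∃ I : Finset (Cell d),
      ∀ z : Config d S, (∀ u ∈ I, z u = x u) → f z 0 = f x 0 := by
    intro x
    have hopen : IsOpen ((fun z : Config d S => f z 0) ⁻¹' {f x 0}) :=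
      ((continuous_apply (0 : Cell d)).comp hcont).isOpen_preimage _ (isOpen_discrete _)
    obtain ⟨I, u, hIu, hsub⟩ := (isOpen_pi_iff.mp hopen) x rfl
    refine ⟨I, fun z hz => ?_⟩
    have : z ∈ (I : Set (Cell d)).pi u := by
      intro i hi
      rw [hz i (by simpa using hi)]
      exact (hIu i (by simpa using hi)).2
    exact hsub this
  choose I hI using h1
  set U : Config d S → Set (Config d S) := fun x => {z | ∀ u ∈ I x, z u = x u} with hU
  have hUopen : ∀ x, IsOpen (U x) := by
    intro x
    have : U x = ⋂ u ∈ I x, {z : Config d S | z u = x u} := by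
      ext z; simp [hU, Set.mem_iInter]
    rw [this]
    refine isOpen_biInter_finset fun u _ => ?_
    have heq : ({z : Config d S | z u = x u}) = (fun z : Config d S => z u) ⁻¹' {x u} := rfl
    rw [heq]
    exact (continuous_apply u).isOpen_preimage _ (isOpen_discrete _)
  have hcover : (Set.univ : Set (Config d S)) ⊆ ⋃ x, U x := by
    intro z _
    exact Set.mem_iUnion.mpr ⟨z, fun u _ => rfl⟩
  obtain ⟨t, ht⟩ := isCompact_univ.elim_finite_subcover U hUopen hcover
  refine ⟨t.biUnion I, fun z z' hzz' => ?_⟩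
  obtain ⟨x, hxt, hzx⟩ := Set.mem_iUnion₂.mp (ht (Set.mem_univ z))
  have hz : f z 0 = f x 0 := hI x z hzx
  have hz' : f z' 0 = f x 0 := by
    refine hI x z' fun u hu => ?_
    rw [← hzz' u (Finset.mem_biUnion.mpr ⟨x, hxt, hu⟩)]
    exact hzx u hu
  rw [hz, hz']

/-- A cellular automaton has a finite radius `r`: configurations agreeing on the
box of radius `M + r` have images agreeing on the box of radius `M`. -/
lemma exists_radius {d : ℕ} {S : Type*} [Fintype S] [TopologicalSpace S]
    [DiscreteTopology S] (f : Config d S → Config d S) (hf : IsCA f) :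
    ∃ r : ℕ, ∀ (M : ℕ) (x x' : Config d S),
      agreeOn (M + r) x x' → agreeOn M (f x) (f x') := by
  classical
  obtain ⟨F, hF⟩ := exists_finset_local f hf.1
  set N : ℕ := F.sup (fun u => Finset.univ.sup (fun i => (u i).natAbs)) with hN
  refine ⟨N, ?_⟩
  intro M x x' hxx' v hv
  have key : ∀ z : Config d S, f z v = f (shiftMap v z) 0 := by
    intro z
    have := congrFun (hf.2 v) z
    have h0 := congrFun this 0
    simp only [Function.comp_apply] at h0
    rw [h0]
    show f z v = f z (v + 0)
    rw [add_zero]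
  rw [key x, key x']
  refine hF _ _ fun u hu => ?_
  show x (v + u) = x' (v + u)
  refine hxx' (v + u) fun i => ?_
  have h1 : |v i| ≤ (M : ℤ) := hv i
  have h2 : (u i).natAbs ≤ N :=
    le_trans (Finset.le_sup (f := fun i => (u i).natAbs) (Finset.mem_univ i))
      (Finset.le_sup (f := fun u => Finset.univ.sup (fun i => (u i).natAbs)) hu)
  have h2' : |u i| ≤ (N : ℤ) := by
    rw [Int.abs_eq_natAbs]; exact_mod_cast h2
  calc |(v + u) i| = |v i + u i| := rfl
    _ ≤ |v i| + |u i| := abs_add_le _ _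
    _ ≤ (M : ℤ) + (N : ℤ) := add_le_add h1 h2'
    _ = ((M + N : ℕ) : ℤ) := by push_cast; ring

/-- If a finite self-enforcing pattern `p` is extended by `y ∈ Ω(f)` and the forward
orbit of `y` eventually leaves `[p]` forever, then `f` is chain-wandering on `Ω(f)`:
for all sufficiently fine chain-tolerances there is no chain within `Ω(f)` from `y`
back to `y`. (With the metric `dist(x,y) = 2^(-sup{n : x,y agree on [-n,n]^d})`, the
condition `agreeOn m (f (c i)) (c (i+1))` says `dist(f (c i), c (i+1)) < 2^(-m)`.) -/
theorem stmt19 {d : ℕ} {S : Type*} [Fintype S] [TopologicalSpace S] [DiscreteTopology S]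
    (f : Config d S → Config d S) (hf : IsCA f)
    (D : Set (Cell d)) (hD : D.Finite) (p : Cell d → S)
    (hse : f ⁻¹' cylinder D p ⊆ cylinder D p)
    (y : Config d S) (hy : y ∈ limitSet f) (hyp : y ∈ cylinder D p)
    (m₀ : ℕ) (hm₀ : 1 ≤ m₀) (hgone : ∀ n ≥ m₀, f^[n] y ∉ cylinder D p) :
    ∃ m : ℕ, ¬ ∃ k ≥ 1, ∃ c : ℕ → Config d S,
      (∀ i ≤ k, c i ∈ limitSet f) ∧ c 0 = y ∧ c k = y ∧
      ∀ i < k, agreeOn m (f (c i)) (c (i + 1)) := by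
  classical
  obtain ⟨r, hr⟩ := exists_radius f hf
  -- a radius R covering the finite domain D
  obtain ⟨R, hR⟩ : ∃ R : ℕ, ∀ u ∈ D, ∀ i, |u i| ≤ (R : ℤ) := by
    refine ⟨hD.toFinset.sup (fun u => Finset.univ.sup (fun i => (u i).natAbs)), ?_⟩
    intro u hu i
    have h2 : (u i).natAbs ≤ hD.toFinset.sup (fun u => Finset.univ.sup (fun i => (u i).natAbs)) :=
      le_trans (Finset.le_sup (f := fun i => (u i).natAbs) (Finset.mem_univ i))
        (Finset.le_sup (f := fun u => Finset.univ.sup (fun i => (u i).natAbs))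
          (hD.mem_toFinset.mpr hu))
    rw [Int.abs_eq_natAbs]; exact_mod_cast h2
  refine ⟨R + m₀ * r, ?_⟩
  rintro ⟨k, hk, c, _, hc0, hck, hchain⟩
  set m := R + m₀ * r with hm
  -- agreement on box m implies same cylinder membership
  have hagree_cyl : ∀ {M : ℕ} (x x' : Config d S), R ≤ M → agreeOn M x x' →
      (x' ∈ cylinder D p → x ∈ cylinder D p) := by
    intro M x x' hRM hxx' hx' u hu
    rw [hxx' u fun i => (hR u hu i).trans (by exact_mod_cast hRM)]
    exact hx' u hu
  -- every element of the chain is in the cylinder (downward induction)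
  have hcyl : ∀ j ≤ k, c (k - j) ∈ cylinder D p := by
    intro j
    induction j with
    | zero => intro _; simpa [hck] using hyp
    | succ n ih =>
      intro hn
      have hn' : n ≤ k := le_of_lt (Nat.lt_of_succ_le hn)
      have hlt : k - (n + 1) < k := by omega
      have heq : k - (n + 1) + 1 = k - n := by omega
      have hnext : c (k - (n + 1) + 1) ∈ cylinder D p := by
        rw [heq]; exact ih hn'
      have hfc : f (c (k - (n + 1))) ∈ cylinder D p :=
        hagree_cyl _ _ (by omega) (hchain _ hlt) hnext
      exact hse hfc
  have hcyl' : ∀ i ≤ k, c i ∈ cylinder D p := by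
    intro i hi
    have := hcyl (k - i) (by omega)
    rwa [Nat.sub_sub_self hi] at this
  -- the periodified chain
  set c' : ℕ → Config d S := fun j => c (j % k) with hc'
  have hc'cyl : ∀ j, c' j ∈ cylinder D p := fun j =>
    hcyl' _ (le_of_lt (Nat.mod_lt _ (by omega)))
  have hc'chain : ∀ j, agreeOn m (f (c' j)) (c' (j + 1)) := by
    intro j
    have hlt : j % k < k := Nat.mod_lt _ (by omega)
    have hmain := hchain (j % k) hlt
    have heq : c' (j + 1) = c (j % k + 1) := by
      show c ((j + 1) % k) = c (j % k + 1)
      have : (j % k + 1) % k = (j + 1) % k := Nat.mod_add_mod j k 1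
      rcases Nat.lt_or_ge (j % k + 1) k with h | h
      · rw [← this, Nat.mod_eq_of_lt h]
      · have hkk : j % k + 1 = k := by omega
        rw [← this, hkk, Nat.mod_self, hc0, ← hck]
    rw [heq]; exact hmain
  -- the orbit of y shadows the chain for m₀ steps
  have hshadow : ∀ j ≤ m₀, agreeOn (R + (m₀ - j) * r) (f^[j] y) (c' j) := by
    intro j
    induction j with
    | zero =>
      intro _
      have : c' 0 = y := by show c (0 % k) = y; rw [Nat.zero_mod, hc0]
      rw [this]
      intro u _; rfl
    | succ n ih =>
      intro hn
      have hn' : n ≤ m₀ := le_of_lt (Nat.lt_of_succ_le hn)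
      have ihn := ih hn'
      have hsplit : R + (m₀ - n) * r = (R + (m₀ - (n + 1)) * r) + r := by
        have : m₀ - n = (m₀ - (n + 1)) + 1 := by omega
        rw [this]; ring
      rw [hsplit] at ihn
      have step1 : agreeOn (R + (m₀ - (n + 1)) * r) (f (f^[n] y)) (f (c' n)) :=
        hr _ _ _ ihn
      have step2 : agreeOn (R + (m₀ - (n + 1)) * r) (f (c' n)) (c' (n + 1)) :=
        agreeOn_mono (by have : m₀ - (n+1) ≤ m₀ := Nat.sub_le _ _
                         calc R + (m₀ - (n + 1)) * r ≤ R + m₀ * r :=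
                                by exact Nat.add_le_add_left (Nat.mul_le_mul_right _ this) _
                           _ = m := rfl) (hc'chain n)
      rw [Function.iterate_succ_apply']
      intro u hu
      rw [step1 u hu, step2 u hu]
  have hfinal : agreeOn R (f^[m₀] y) (c' m₀) := by
    have := hshadow m₀ le_rfl
    simpa using this
  exact hgone m₀ le_rfl (hagree_cyl _ _ le_rfl hfinal (hc'cyl m₀))
end
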